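/- arXiv:2011.02411 — 2 statements merged into one kernel-verified Lean document; each statement's English description precedes it below -/
import Mathlib

section
/- There exists a universal constant C > 0 such that for every κ > 0 and every continuously differentiable, compactly supported function u : ℝ³ → ℝ whose support is contained in the closed strip ℝ² × [0,1], one has ‖u‖_{L⁶(ℝ³)} ≤ C ( κ^{-1/2} ‖∇_h u‖_{L²(ℝ³)} + κ ‖∂₃ u‖_{L²(ℝ³)} ). -/
/-!
Rescaling the vertical variable, `v(x) = u(x₁, x₂, l x₃)`, multiplies `‖u‖_{L⁶}` by `l^{-1/6}`,
`‖∇_h u‖_{L²}` by `l^{-1/2}` and `‖∂₃u‖_{L²}` by `l^{1/2}`. Applying the Gagliardo–Nirenberg–Sobolev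
inequality `‖v‖_{L⁶} ≤ K ‖∇v‖_{L²}` on `ℝ³` to `v` therefore gives
`‖u‖_{L⁶} ≤ K (2 l^{-1/3} ‖∇_h u‖_{L²} + l^{2/3} ‖∂₃u‖_{L²})`, and `l = κ^{3/2}` balances the two
terms as claimed.
-/

open MeasureTheory ENNReal

theorem eLpNorm_comp_continuousLinearEquiv {E ε : Type*} [NormedAddCommGroup E]
    [NormedSpace ℝ E] [MeasurableSpace E] [BorelSpace E] [FiniteDimensional ℝ E]
    [TopologicalSpace ε] [ContinuousENorm ε] (μ : Measure E) [μ.IsAddHaarMeasure]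
    (A : E ≃L[ℝ] E) (g : E → ε) (p : ℝ≥0∞) :
    eLpNorm (g ∘ A) p μ =
      ENNReal.ofReal |(A : E →L[ℝ] E).det|⁻¹ ^ (1 / p).toReal * eLpNorm g p μ := by
  have hdet : (A : E →L[ℝ] E).det ≠ 0 := (LinearEquiv.isUnit_det' A.toLinearEquiv).ne_zero
  have hmap := Measure.map_linearMap_addHaar_eq_smul_addHaar μ (f := (A : E →L[ℝ] E)) hdet
  simp only [ContinuousLinearMap.coe_coe, ContinuousLinearEquiv.coe_coe] at hmap
  have hA : MeasurableEmbedding A := A.toHomeomorph.measurableEmbedding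
  rw [← hA.eLpNorm_map_measure, hmap,
    eLpNorm_smul_measure_of_ne_zero (ENNReal.ofReal_pos.mpr (abs_pos.mpr (inv_ne_zero hdet))).ne',
    smul_eq_mul, abs_inv]

theorem ContinuousLinearMap.opNorm_le_sum_norm_apply_single {ι F : Type*} [Fintype ι]
    [DecidableEq ι] [NormedAddCommGroup F] [NormedSpace ℝ F] (L : (ι → ℝ) →L[ℝ] F) :
    ‖L‖ ≤ ∑ i, ‖L (Pi.single i 1)‖ := by
  refine L.opNorm_le_bound (by positivity) fun x => ?_
  calc ‖L x‖ = ‖∑ i, x i • L (Pi.single i 1)‖ := by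
        conv_lhs => rw [← Finset.univ_sum_single x]
        simp only [map_sum, ← L.map_smul, ← Pi.single_smul, smul_eq_mul, mul_one]
    _ ≤ ∑ i, ‖x‖ * ‖L (Pi.single i 1)‖ := by
        refine (norm_sum_le _ _).trans (Finset.sum_le_sum fun i _ => ?_)
        rw [norm_smul]
        gcongr
        exact norm_le_pi_norm x i
    _ = (∑ i, ‖L (Pi.single i 1)‖) * ‖x‖ := by rw [Finset.sum_mul]; simp_rw [mul_comm]

theorem ofReal_rpow_mul_ofReal_rpow {x : ℝ} (hx : 0 < x) (a b : ℝ) :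
    ENNReal.ofReal (x ^ a) * ENNReal.ofReal (x ^ b) = ENNReal.ofReal (x ^ (a + b)) := by
  rw [← ENNReal.ofReal_mul (by positivity), Real.rpow_add hx]

theorem abs_add_abs_le_two_mul_sqrt (a b : ℝ) : |a| + |b| ≤ 2 * √(a ^ 2 + b ^ 2) := by
  have ha : |a| ≤ √(a ^ 2 + b ^ 2) := Real.abs_le_sqrt (by nlinarith)
  have hb : |b| ≤ √(a ^ 2 + b ^ 2) := Real.abs_le_sqrt (by nlinarith)
  linarith

section DiagonalScaling

variable {ι : Type*}

noncomputable def diagScale (c : ι → ℝˣ) : (ι → ℝ) ≃L[ℝ] (ι → ℝ) :=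
  ContinuousLinearEquiv.piCongrRight fun i => ContinuousLinearEquiv.unitsEquivAut ℝ (c i)

@[simp]
theorem diagScale_apply (c : ι → ℝˣ) (x : ι → ℝ) (i : ι) : diagScale c x i = x i * c i := rfl

theorem det_diagScale [Fintype ι] [DecidableEq ι] (c : ι → ℝˣ) :
    (diagScale c : (ι → ℝ) →L[ℝ] (ι → ℝ)).det = ∏ i, (c i : ℝ) := by
  have : ((diagScale c : (ι → ℝ) →L[ℝ] (ι → ℝ)) : (ι → ℝ) →ₗ[ℝ] (ι → ℝ)) =
      Matrix.toLin' (Matrix.diagonal fun i => (c i : ℝ)) := by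
    ext x i
    simp [Matrix.mulVec_diagonal, mul_comm]
  rw [ContinuousLinearMap.det, this, LinearMap.det_toLin', Matrix.det_diagonal]

theorem fderiv_comp_diagScale_apply_single [Fintype ι] [DecidableEq ι] (c : ι → ℝˣ)
    (u : (ι → ℝ) → ℝ) (x : ι → ℝ) (i : ι) :
    fderiv ℝ (u ∘ diagScale c) x (Pi.single i 1) =
      c i * fderiv ℝ u (diagScale c x) (Pi.single i 1) := by
  have : diagScale c (Pi.single i 1) = (c i : ℝ) • Pi.single i 1 := by
    ext j; by_cases h : j = i <;> simp [h]
  rw [(diagScale c).comp_right_fderiv (f := u), ContinuousLinearMap.comp_apply,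
    ContinuousLinearEquiv.coe_coe, this, map_smul, smul_eq_mul]

end DiagonalScaling

noncomputable def horizGradNorm (u : (Fin 3 → ℝ) → ℝ) (x : Fin 3 → ℝ) : ℝ :=
  √(fderiv ℝ u x (Pi.single 0 1) ^ 2 + fderiv ℝ u x (Pi.single 1 1) ^ 2)

theorem continuous_horizGradNorm {u : (Fin 3 → ℝ) → ℝ} (hu : ContDiff ℝ 1 u) :
    Continuous (horizGradNorm u) := by
  have hDu := hu.continuous_fderiv one_ne_zero
  exact (((hDu.clm_apply continuous_const).pow 2).add
    ((hDu.clm_apply continuous_const).pow 2)).sqrt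

noncomputable def vertScale (l : ℝˣ) : (Fin 3 → ℝ) ≃L[ℝ] (Fin 3 → ℝ) :=
  diagScale (Pi.mulSingle 2 l)

theorem det_vertScale (l : ℝˣ) : (vertScale l : (Fin 3 → ℝ) →L[ℝ] (Fin 3 → ℝ)).det = l := by
  rw [vertScale, det_diagScale, ← Units.coe_prod, Finset.prod_pi_mulSingle']
  simp

theorem eLpNorm_comp_vertScale {l : ℝˣ} (hl : 0 < (l : ℝ)) (g : (Fin 3 → ℝ) → ℝ) (p : ℝ≥0∞) :
    eLpNorm (g ∘ vertScale l) p volume =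
      ENNReal.ofReal ((l : ℝ) ^ (-(1 / p).toReal)) * eLpNorm g p volume := by
  rw [eLpNorm_comp_continuousLinearEquiv, det_vertScale, abs_of_pos hl,
    ENNReal.ofReal_rpow_of_pos (inv_pos.2 hl), Real.inv_rpow hl.le, Real.rpow_neg hl.le]

theorem norm_fderiv_comp_vertScale_le (l : ℝˣ) (u : (Fin 3 → ℝ) → ℝ) (x : Fin 3 → ℝ) :
    ‖fderiv ℝ (u ∘ vertScale l) x‖ ≤
      2 * horizGradNorm u (vertScale l x) +
        |(l : ℝ)| * ‖fderiv ℝ u (vertScale l x) (Pi.single 2 1)‖ := by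
  refine (ContinuousLinearMap.opNorm_le_sum_norm_apply_single _).trans ?_
  simp only [Fin.sum_univ_three, vertScale, fderiv_comp_diagScale_apply_single, norm_mul,
    Pi.mulSingle_eq_same, ne_eq, Fin.reduceEq, not_false_eq_true, Pi.mulSingle_eq_of_ne,
    Units.val_one, Real.norm_eq_abs, abs_one, one_mul]
  have := abs_add_abs_le_two_mul_sqrt
    (fderiv ℝ u (diagScale (Pi.mulSingle 2 l) x) (Pi.single 0 1))
    (fderiv ℝ u (diagScale (Pi.mulSingle 2 l) x) (Pi.single 1 1))
  rw [horizGradNorm]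
  linarith

theorem eLpNorm_fderiv_comp_vertScale_le {u : (Fin 3 → ℝ) → ℝ} (hu : ContDiff ℝ 1 u)
    {l : ℝˣ} (hl : 0 < (l : ℝ)) :
    eLpNorm (fderiv ℝ (u ∘ vertScale l)) 2 volume ≤
      2 * ENNReal.ofReal ((l : ℝ) ^ (-(1 / 2) : ℝ)) * eLpNorm (horizGradNorm u) 2 volume +
        ENNReal.ofReal ((l : ℝ) ^ (1 / 2 : ℝ)) *
          eLpNorm (fun x => fderiv ℝ u x (Pi.single 2 1)) 2 volume := by
  set S := vertScale l
  have hD₃ : Continuous fun x => ‖fderiv ℝ u x (Pi.single 2 1)‖ :=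
    ((hu.continuous_fderiv one_ne_zero).clm_apply continuous_const).norm
  calc eLpNorm (fderiv ℝ (u ∘ S)) 2 volume
      ≤ eLpNorm ((2 : ℝ) • (horizGradNorm u ∘ S) +
          (l : ℝ) • ((fun x => ‖fderiv ℝ u x (Pi.single 2 1)‖) ∘ S)) 2 volume :=
        eLpNorm_mono_real fun x => by
          simpa [abs_of_pos hl] using norm_fderiv_comp_vertScale_le l u x
    _ ≤ 2 * eLpNorm (horizGradNorm u ∘ S) 2 volume +
          ENNReal.ofReal l * eLpNorm ((fun x => ‖fderiv ℝ u x (Pi.single 2 1)‖) ∘ S) 2 volume := by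
        refine (eLpNorm_add_le ?_ ?_ one_le_two).trans_eq ?_
        · exact (((continuous_horizGradNorm hu).comp S.continuous).const_smul _)
            |>.aestronglyMeasurable
        · exact ((hD₃.comp S.continuous).const_smul _).aestronglyMeasurable
        rw [eLpNorm_const_smul, eLpNorm_const_smul, Real.enorm_eq_ofReal hl.le,
          Real.enorm_eq_ofReal zero_le_two, ENNReal.ofReal_ofNat]
    _ = _ := by
        have h2 : (1 / (2 : ℝ≥0∞)).toReal = 1 / 2 := by norm_num
        have hl1 : ENNReal.ofReal l = ENNReal.ofReal ((l : ℝ) ^ (1 : ℝ)) := by rw [Real.rpow_one]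
        rw [eLpNorm_comp_vertScale hl, eLpNorm_comp_vertScale hl, eLpNorm_norm, h2, hl1,
          ← mul_assoc, ← mul_assoc, ofReal_rpow_mul_ofReal_rpow hl]
        norm_num

theorem eLpNorm_six_le_eLpNorm_fderiv_two {u : (Fin 3 → ℝ) → ℝ} (hu : ContDiff ℝ 1 u)
    (h2u : HasCompactSupport u) :
    eLpNorm u 6 volume ≤
      SNormLESNormFDerivOfEqConst ℝ (volume : Measure (Fin 3 → ℝ)) 2 *
        eLpNorm (fderiv ℝ u) 2 volume := by
  have := eLpNorm_le_eLpNorm_fderiv_of_eq volume hu h2u (p := 2) (p' := 6) (by norm_num)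
    (by simp) (by norm_num)
  exact_mod_cast this

theorem eLpNorm_six_le_of_vertScale {u : (Fin 3 → ℝ) → ℝ} (hu : ContDiff ℝ 1 u)
    (h2u : HasCompactSupport u) {l : ℝˣ} (hl : 0 < (l : ℝ)) :
    eLpNorm u 6 volume ≤
      SNormLESNormFDerivOfEqConst ℝ (volume : Measure (Fin 3 → ℝ)) 2 *
        (2 * ENNReal.ofReal ((l : ℝ) ^ (-(1 / 3) : ℝ)) * eLpNorm (horizGradNorm u) 2 volume +
          ENNReal.ofReal ((l : ℝ) ^ (2 / 3 : ℝ)) *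
            eLpNorm (fun x => fderiv ℝ u x (Pi.single 2 1)) 2 volume) := by
  set S := vertScale l
  set K := SNormLESNormFDerivOfEqConst ℝ (volume : Measure (Fin 3 → ℝ)) 2
  set G := eLpNorm (horizGradNorm u) 2 volume
  set H := eLpNorm (fun x => fderiv ℝ u x (Pi.single 2 1)) 2 volume
  set a := ENNReal.ofReal ((l : ℝ) ^ (1 / 6 : ℝ))
  have h6 : (1 / (6 : ℝ≥0∞)).toReal = 1 / 6 := by norm_num
  calc eLpNorm u 6 volume = a * eLpNorm (u ∘ S) 6 volume := by
        rw [eLpNorm_comp_vertScale hl, ← mul_assoc, ofReal_rpow_mul_ofReal_rpow hl, h6]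
        norm_num
    _ ≤ a * (K * (2 * ENNReal.ofReal ((l : ℝ) ^ (-(1 / 2) : ℝ)) * G +
          ENNReal.ofReal ((l : ℝ) ^ (1 / 2 : ℝ)) * H)) := by
        gcongr
        exact (eLpNorm_six_le_eLpNorm_fderiv_two (hu.comp S.contDiff)
          (h2u.comp_homeomorph S.toHomeomorph)).trans
          (by gcongr; exact eLpNorm_fderiv_comp_vertScale_le hu hl)
    _ = K * (2 * (a * ENNReal.ofReal ((l : ℝ) ^ (-(1 / 2) : ℝ))) * G +
          a * ENNReal.ofReal ((l : ℝ) ^ (1 / 2 : ℝ)) * H) := by ring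
    _ = _ := by
        rw [ofReal_rpow_mul_ofReal_rpow hl, ofReal_rpow_mul_ofReal_rpow hl]
        norm_num

/-- **Anisotropic Sobolev embedding on the strip** (Lemma 3.3 of the paper).
There is a universal constant `C > 0` such that for every `κ > 0` and every `C¹`,
compactly supported `u : ℝ³ → ℝ` supported in the closed strip `ℝ² × [0,1]`,
`‖u‖_{L⁶} ≤ C (κ^{-1/2} ‖∇_h u‖_{L²} + κ ‖∂₃ u‖_{L²})`. -/
theorem anisotropic_sobolev_strip :
    ∃ C : ℝ, 0 < C ∧
      ∀ κ : ℝ, 0 < κ →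
      ∀ u : (Fin 3 → ℝ) → ℝ, ContDiff ℝ 1 u → HasCompactSupport u →
        (Function.support u ⊆ {x : Fin 3 → ℝ | x 2 ∈ Set.Icc (0 : ℝ) 1}) →
        eLpNorm u 6 volume ≤
          ENNReal.ofReal C *
            (ENNReal.ofReal (κ ^ (-(1/2) : ℝ)) *
                eLpNorm (fun x => Real.sqrt
                  ((fderiv ℝ u x (Pi.single 0 1)) ^ 2 +
                   (fderiv ℝ u x (Pi.single 1 1)) ^ 2)) 2 volume +
              ENNReal.ofReal κ *
                eLpNorm (fun x => fderiv ℝ u x (Pi.single 2 1)) 2 volume) := by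
  set K := SNormLESNormFDerivOfEqConst ℝ (volume : Measure (Fin 3 → ℝ)) 2
  have hconst : ∀ x a y b : ℝ≥0∞, (K : ℝ≥0∞) * (2 * x * a + y * b) ≤
      ENNReal.ofReal (2 * K + 1) * (x * a + y * b) := fun x a y b => by
    have hK : ENNReal.ofReal (2 * K + 1) = 2 * K + 1 := by
      rw [ENNReal.ofReal_add (by positivity) zero_le_one, ENNReal.ofReal_mul zero_le_two,
        ENNReal.ofReal_coe_nnreal, ENNReal.ofReal_ofNat, ENNReal.ofReal_one]
    calc (K : ℝ≥0∞) * (2 * x * a + y * b) = 2 * K * (x * a) + K * (y * b) := by ring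
      _ ≤ (2 * K + 1) * (x * a) + (2 * K + 1) * (y * b) := by
        gcongr
        · exact le_self_add
        · rw [two_mul, add_assoc]
          exact le_self_add
      _ = _ := by rw [hK, mul_add]
  refine ⟨2 * K + 1, by positivity, fun κ hκ u hu h2u _ => ?_⟩
  have hl : 0 < κ ^ (3 / 2 : ℝ) := by positivity
  have hscaled := eLpNorm_six_le_of_vertScale hu h2u (l := Units.mk0 _ hl.ne') hl
  simp only [Units.val_mk0, ← Real.rpow_mul hκ.le] at hscaled
  norm_num at hscaled
  exact hscaled.trans (hconst _ _ _ _)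
end

section
/- Let P : (0,∞) → ℝ be continuously differentiable with P'(z) > 0 for all z > 0, define H(ρ) := ρ ∫₁^ρ P(z)/z² dz and E(ρ, r) := H(ρ) − H(r) − H'(r)(ρ − r). Let Ω = ℝ² × (0,1), let ρ̄ : [0,1] → ℝ be continuous with κ := inf_{[0,1]} ρ̄ > 0, let σ satisfy 0 < σ < min(2/3, κ), and let ρ_app : Ω → ℝ satisfy |ρ_app(x) − ρ̄(x₃)| ≤ σ/2 for all x = (x₁,x₂,x₃) ∈ Ω. Then there exists a constant c > 0, depending only on P, ρ̄ and σ, such that for every x ∈ Ω and every ρ > 0: (i) if |ρ − ρ̄(x₃)| < σ, then |ρ − ρ_app(x)| < 1 and E(ρ, ρ_app(x)) ≥ c (ρ − ρ_app(x))²; and (ii) if |ρ − ρ̄(x₃)| ≥ σ, then E(ρ, ρ_app(x)) ≥ c. -/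
open MeasureTheory intervalIntegral

noncomputable def Iint (P : ℝ → ℝ) (x : ℝ) : ℝ := ∫ z in (1:ℝ)..x, P z / z ^ 2

noncomputable def phiH (P : ℝ → ℝ) (x : ℝ) : ℝ := Iint P x + P x / x

lemma integrand_contOn {P : ℝ → ℝ} (hP : ContinuousOn P (Set.Ioi 0)) :
    ContinuousOn (fun z => P z / z ^ 2) (Set.Ioi 0) :=
  hP.div ((continuous_pow 2).continuousOn) (fun z hz => pow_ne_zero _ (ne_of_gt hz))

lemma hasDerivAt_Iint {P : ℝ → ℝ} (hP : ContinuousOn P (Set.Ioi 0)) {t : ℝ} (ht : 0 < t) :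
    HasDerivAt (Iint P) (P t / t ^ 2) t := by
  have hc := integrand_contOn hP
  have hsub : Set.uIcc 1 t ⊆ Set.Ioi 0 := by
    rcases le_total 1 t with h | h
    · rw [Set.uIcc_of_le h]; exact fun z hz => lt_of_lt_of_le one_pos hz.1
    · rw [Set.uIcc_of_ge h]; exact fun z hz => lt_of_lt_of_le ht hz.1
  exact integral_hasDerivAt_right ((hc.mono hsub).intervalIntegrable)
    (hc.stronglyMeasurableAtFilter isOpen_Ioi t ht)
    (hc.continuousAt (isOpen_Ioi.mem_nhds ht))

lemma hasDerivAt_H {P H : ℝ → ℝ} (hP : ContinuousOn P (Set.Ioi 0))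
    (hH : ∀ ρ : ℝ, H ρ = ρ * Iint P ρ) {t : ℝ} (ht : 0 < t) :
    HasDerivAt H (phiH P t) t := by
  have h1 : HasDerivAt (fun ρ => ρ * Iint P ρ) (1 * Iint P t + t * (P t / t ^ 2)) t :=
    (hasDerivAt_id t).mul (hasDerivAt_Iint hP ht)
  have hfun : H = fun ρ => ρ * Iint P ρ := funext hH
  rw [hfun]
  convert h1 using 1
  have ht' : t ≠ 0 := ne_of_gt ht
  unfold phiH
  field_simp

lemma hasDerivAt_phiH {P : ℝ → ℝ} (hP : ContDiffOn ℝ 1 P (Set.Ioi 0)) {t : ℝ} (ht : 0 < t) :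
    HasDerivAt (phiH P) (deriv P t / t) t := by
  have hPd : HasDerivAt P (deriv P t) t :=
    ((hP.differentiableOn one_ne_zero).differentiableAt (isOpen_Ioi.mem_nhds ht)).hasDerivAt
  have h2 : HasDerivAt (fun x => P x / x) ((deriv P t * t - P t * 1) / t ^ 2) t :=
    hPd.div (hasDerivAt_id t) (ne_of_gt ht)
  have h := (hasDerivAt_Iint hP.continuousOn ht).add h2
  have ht' : t ≠ 0 := ne_of_gt ht
  exact h.congr_deriv (by field_simp; ring)

lemma contOn_derivP {P : ℝ → ℝ} (hP : ContDiffOn ℝ 1 P (Set.Ioi 0)) :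
    ContinuousOn (fun t => deriv P t / t) (Set.Ioi 0) := by
  have h1 : ContinuousOn (derivWithin P (Set.Ioi 0)) (Set.Ioi 0) :=
    hP.continuousOn_derivWithin isOpen_Ioi.uniqueDiffOn le_rfl
  have h2 : ContinuousOn (deriv P) (Set.Ioi 0) :=
    h1.congr (fun x hx => (derivWithin_of_isOpen isOpen_Ioi hx).symm)
  exact h2.div continuousOn_id (fun z hz => ne_of_gt hz)

lemma phiH_strictMonoOn {P : ℝ → ℝ} (hP : ContDiffOn ℝ 1 P (Set.Ioi 0))
    (hP' : ∀ z : ℝ, 0 < z → 0 < deriv P z) :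
    StrictMonoOn (phiH P) (Set.Ioi 0) := by
  apply strictMonoOn_of_deriv_pos (convex_Ioi 0)
  · exact fun x hx => (hasDerivAt_phiH hP hx).continuousAt.continuousWithinAt
  · intro x hx
    rw [interior_Ioi] at hx
    rw [(hasDerivAt_phiH hP hx).deriv]
    exact div_pos (hP' x hx) hx

/-- Quadratic lower bound for the relative entropy on a compact interval. -/
lemma rel_entropy_quad {P H : ℝ → ℝ} (hP : ContDiffOn ℝ 1 P (Set.Ioi 0))
    (hH : ∀ ρ : ℝ, H ρ = ρ * Iint P ρ)
    {a b m : ℝ} (ha : 0 < a)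
    (hm : ∀ t ∈ Set.Icc a b, m ≤ deriv P t / t)
    {r ρ : ℝ} (hr : r ∈ Set.Icc a b) (hρ : ρ ∈ Set.Icc a b) :
    m / 2 * (ρ - r) ^ 2 ≤ H ρ - H r - phiH P r * (ρ - r) := by
  -- ψ = phiH - m·id is monotone on [a,b]
  have hpos : ∀ x ∈ Set.Icc a b, (0:ℝ) < x := fun x hx => lt_of_lt_of_le ha hx.1
  set ψ : ℝ → ℝ := fun x => phiH P x - m * x with hψdef
  have hψd : ∀ x ∈ Set.Icc a b, HasDerivAt ψ (deriv P x / x - m * 1) x := fun x hx =>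
    (hasDerivAt_phiH hP (hpos x hx)).sub ((hasDerivAt_id x).const_mul m)
  have hψmono : MonotoneOn ψ (Set.Icc a b) := by
    apply monotoneOn_of_deriv_nonneg (convex_Icc a b)
    · exact fun x hx => (hψd x hx).continuousAt.continuousWithinAt
    · intro x hx
      rw [interior_Icc] at hx
      exact (hψd x (Set.mem_Icc_of_Ioo hx)).differentiableAt.differentiableWithinAt
    · intro x hx
      rw [interior_Icc] at hx
      rw [(hψd x (Set.mem_Icc_of_Ioo hx)).deriv]
      have := hm x (Set.mem_Icc_of_Ioo hx)
      linarith
  -- F x := E x r − (m/2)(x−r)²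
  set F : ℝ → ℝ := fun x => H x - H r - phiH P r * (x - r) - m / 2 * (x - r) ^ 2 with hFdef
  have hFd : ∀ x : ℝ, 0 < x → HasDerivAt F (ψ x - ψ r) x := by
    intro x hx
    have h1 := hasDerivAt_H hP.continuousOn hH hx
    have h2 : HasDerivAt (fun x : ℝ => phiH P r * (x - r)) (phiH P r * 1) x :=
      ((hasDerivAt_id x).sub_const r).const_mul (phiH P r)
    have h3 : HasDerivAt (fun x : ℝ => m / 2 * (x - r) ^ 2)
        (m / 2 * ((2 : ℕ) * (x - r) ^ 1 * 1)) x :=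
      (((hasDerivAt_id x).sub_const r).pow 2).const_mul (m / 2)
    have h := ((h1.sub_const (H r)).sub h2).sub h3
    exact h.congr_deriv (by simp [hψdef]; ring)
  have hFr : F r = 0 := by simp [hFdef]
  rcases le_total r ρ with hle | hle
  · -- F monotone on [r, b]
    have hmono : MonotoneOn F (Set.Icc r b) := by
      apply monotoneOn_of_deriv_nonneg (convex_Icc r b)
      · exact fun x hx =>
          (hFd x (lt_of_lt_of_le (hpos r hr) hx.1)).continuousAt.continuousWithinAt
      · intro x hx
        rw [interior_Icc] at hx
        exact (hFd x (lt_of_lt_of_le (hpos r hr) hx.1.le)).differentiableAt.differentiableWithinAt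
      · intro x hx
        rw [interior_Icc] at hx
        rw [(hFd x (lt_of_lt_of_le (hpos r hr) hx.1.le)).deriv]
        have hxm : x ∈ Set.Icc a b := ⟨hr.1.trans hx.1.le, hx.2.le⟩
        have := hψmono hr hxm hx.1.le
        linarith
    have := hmono (Set.left_mem_Icc.mpr (hle.trans hρ.2)) ⟨hle, hρ.2⟩ hle
    rw [hFr] at this
    have hFρ : F ρ = H ρ - H r - phiH P r * (ρ - r) - m / 2 * (ρ - r) ^ 2 := rfl
    rw [hFρ] at this
    linarith
  · -- F antitone on [a, r]
    have hanti : AntitoneOn F (Set.Icc a r) := by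
      apply antitoneOn_of_deriv_nonpos (convex_Icc a r)
      · exact fun x hx =>
          (hFd x (lt_of_lt_of_le ha hx.1)).continuousAt.continuousWithinAt
      · intro x hx
        rw [interior_Icc] at hx
        exact (hFd x (lt_of_lt_of_le ha hx.1.le)).differentiableAt.differentiableWithinAt
      · intro x hx
        rw [interior_Icc] at hx
        rw [(hFd x (lt_of_lt_of_le ha hx.1.le)).deriv]
        have hxm : x ∈ Set.Icc a b := ⟨hx.1.le, hx.2.le.trans hr.2⟩
        have := hψmono hxm hr hx.2.le
        linarith
    have := hanti ⟨hρ.1, hle⟩ (Set.right_mem_Icc.mpr (hρ.1.trans hle)) hle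
    rw [hFr] at this
    have hFρ : F ρ = H ρ - H r - phiH P r * (ρ - r) - m / 2 * (ρ - r) ^ 2 := rfl
    rw [hFρ] at this
    linarith

/-- Monotonicity of the relative entropy to the right of `r`. -/
lemma rel_entropy_mono_right {P H : ℝ → ℝ} (hP : ContDiffOn ℝ 1 P (Set.Ioi 0))
    (hP' : ∀ z : ℝ, 0 < z → 0 < deriv P z)
    (hH : ∀ ρ : ℝ, H ρ = ρ * Iint P ρ) {r u v : ℝ}
    (hr : 0 < r) (hu : r ≤ u) (huv : u ≤ v) :
    H u - H r - phiH P r * (u - r) ≤ H v - H r - phiH P r * (v - r) := by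
  set G : ℝ → ℝ := fun x => H x - H r - phiH P r * (x - r) with hGdef
  have hGd : ∀ x : ℝ, 0 < x → HasDerivAt G (phiH P x - phiH P r) x := by
    intro x hx
    have h1 := hasDerivAt_H hP.continuousOn hH hx
    have h2 : HasDerivAt (fun x : ℝ => phiH P r * (x - r)) (phiH P r * 1) x :=
      ((hasDerivAt_id x).sub_const r).const_mul (phiH P r)
    have h := (h1.sub_const (H r)).sub h2
    exact h.congr_deriv (by ring)
  have hmono : MonotoneOn G (Set.Icc u v) := by
    apply monotoneOn_of_deriv_nonneg (convex_Icc u v)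
    · exact fun x hx => (hGd x (lt_of_lt_of_le hr (hu.trans hx.1))).continuousAt.continuousWithinAt
    · intro x hx
      rw [interior_Icc] at hx
      exact (hGd x (lt_of_lt_of_le hr (hu.trans hx.1.le))).differentiableAt.differentiableWithinAt
    · intro x hx
      rw [interior_Icc] at hx
      rw [(hGd x (lt_of_lt_of_le hr (hu.trans hx.1.le))).deriv]
      have hxr : r ≤ x := hu.trans hx.1.le
      have := (phiH_strictMonoOn hP hP').monotoneOn hr (lt_of_lt_of_le hr hxr) hxr
      linarith
  exact hmono (Set.left_mem_Icc.mpr huv) (Set.right_mem_Icc.mpr huv) huv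

/-- Antitonicity of the relative entropy to the left of `r`. -/
lemma rel_entropy_anti_left {P H : ℝ → ℝ} (hP : ContDiffOn ℝ 1 P (Set.Ioi 0))
    (hP' : ∀ z : ℝ, 0 < z → 0 < deriv P z)
    (hH : ∀ ρ : ℝ, H ρ = ρ * Iint P ρ) {r u v : ℝ}
    (hu : 0 < u) (huv : u ≤ v) (hv : v ≤ r) :
    H v - H r - phiH P r * (v - r) ≤ H u - H r - phiH P r * (u - r) := by
  have hr : 0 < r := lt_of_lt_of_le hu (huv.trans hv)
  set G : ℝ → ℝ := fun x => H x - H r - phiH P r * (x - r) with hGdef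
  have hGd : ∀ x : ℝ, 0 < x → HasDerivAt G (phiH P x - phiH P r) x := by
    intro x hx
    have h1 := hasDerivAt_H hP.continuousOn hH hx
    have h2 : HasDerivAt (fun x : ℝ => phiH P r * (x - r)) (phiH P r * 1) x :=
      ((hasDerivAt_id x).sub_const r).const_mul (phiH P r)
    have h := (h1.sub_const (H r)).sub h2
    exact h.congr_deriv (by ring)
  have hanti : AntitoneOn G (Set.Icc u v) := by
    apply antitoneOn_of_deriv_nonpos (convex_Icc u v)
    · exact fun x hx => (hGd x (lt_of_lt_of_le hu hx.1)).continuousAt.continuousWithinAt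
    · intro x hx
      rw [interior_Icc] at hx
      exact (hGd x (lt_of_lt_of_le hu hx.1.le)).differentiableAt.differentiableWithinAt
    · intro x hx
      rw [interior_Icc] at hx
      rw [(hGd x (lt_of_lt_of_le hu hx.1.le)).deriv]
      have hxr : x ≤ r := (hx.2.le).trans hv
      have := (phiH_strictMonoOn hP hP').monotoneOn (lt_of_lt_of_le hu hx.1.le) hr hxr
      linarith
  exact hanti (Set.left_mem_Icc.mpr huv) (Set.right_mem_Icc.mpr huv) huv

/-- **Pointwise lower bounds for the relative entropy** (Lemma 3.4 of the paper):
on the essential set `{|ρ − ρ̄(x₃)| < σ}` the relative entropy `E(ρ, ρ_app(x))`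
dominates `c (ρ − ρ_app(x))²` (and `|ρ − ρ_app(x)| < 1`), while on the residual set
`{|ρ − ρ̄(x₃)| ≥ σ}` it is bounded below by `c > 0`, with `c` depending only on
`P`, `ρ̄` and `σ`. Here `Ω = ℝ² × (0,1)`, `H(ρ) = ρ ∫₁^ρ P(z)/z² dz`,
`E(ρ,r) = H(ρ) − H(r) − H'(r)(ρ − r)`, `κ = inf_{[0,1]} ρ̄ > 0`,
`0 < σ < min(2/3, κ)` and `|ρ_app(x) − ρ̄(x₃)| ≤ σ/2` on `Ω`. -/
theorem relative_entropy_lower_bounds (P H : ℝ → ℝ) (E : ℝ → ℝ → ℝ)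
    (ρbar : ℝ → ℝ) (σ : ℝ)
    (hP : ContDiffOn ℝ 1 P (Set.Ioi 0))
    (hP' : ∀ z : ℝ, 0 < z → 0 < deriv P z)
    (hH : ∀ ρ : ℝ, H ρ = ρ * ∫ z in (1:ℝ)..ρ, P z / z ^ 2)
    (hE : ∀ ρ r : ℝ, E ρ r = H ρ - H r - deriv H r * (ρ - r))
    (hρbar : ContinuousOn ρbar (Set.Icc 0 1))
    (hκ : 0 < sInf (ρbar '' Set.Icc 0 1))
    (hσ0 : 0 < σ) (hσ : σ < min (2/3) (sInf (ρbar '' Set.Icc 0 1))) :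
    ∃ c : ℝ, 0 < c ∧
      ∀ ρapp : (Fin 3 → ℝ) → ℝ,
        (∀ x : Fin 3 → ℝ, x 2 ∈ Set.Ioo (0:ℝ) 1 → |ρapp x - ρbar (x 2)| ≤ σ / 2) →
        ∀ x : Fin 3 → ℝ, x 2 ∈ Set.Ioo (0:ℝ) 1 → ∀ ρ : ℝ, 0 < ρ →
          ((|ρ - ρbar (x 2)| < σ →
              |ρ - ρapp x| < 1 ∧ c * (ρ - ρapp x) ^ 2 ≤ E ρ (ρapp x)) ∧
           (σ ≤ |ρ - ρbar (x 2)| → c ≤ E ρ (ρapp x))) := by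
  have hHI : ∀ ρ : ℝ, H ρ = ρ * Iint P ρ := hH
  set κ := sInf (ρbar '' Set.Icc 0 1) with hκdef
  have hσ23 : σ < 2/3 := lt_of_lt_of_le hσ (min_le_left _ _)
  have hσκ : σ < κ := lt_of_lt_of_le hσ (min_le_right _ _)
  -- the image is compact, get an upper bound M
  have hne : (ρbar '' Set.Icc 0 1).Nonempty :=
    (Set.nonempty_Icc.mpr zero_le_one).image ρbar
  have hcomp : IsCompact (ρbar '' Set.Icc 0 1) :=
    isCompact_Icc.image_of_continuousOn hρbar
  obtain ⟨M, hMmem, hM'⟩ := hcomp.exists_isMaxOn hne continuousOn_id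
  have hM : ∀ y ∈ ρbar '' Set.Icc 0 1, y ≤ M := fun y hy => hM' hy
  have hlow : ∀ t ∈ Set.Icc (0:ℝ) 1, κ ≤ ρbar t := fun t ht =>
    csInf_le hcomp.bddBelow (Set.mem_image_of_mem ρbar ht)
  have hup : ∀ t ∈ Set.Icc (0:ℝ) 1, ρbar t ≤ M := fun t ht =>
    hM _ (Set.mem_image_of_mem ρbar ht)
  have hκM : κ ≤ M := le_trans (hlow 0 (Set.left_mem_Icc.mpr zero_le_one))
    (hup 0 (Set.left_mem_Icc.mpr zero_le_one))
  set a := κ - σ with hadef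
  set b := M + σ with hbdef
  have ha : 0 < a := sub_pos.mpr hσκ
  have hab : a ≤ b := by simp only [hadef, hbdef]; linarith
  -- minimum of H'' = P'/t on [a,b]
  obtain ⟨t₀, ht₀, hmin⟩ := (isCompact_Icc : IsCompact (Set.Icc a b)).exists_isMinOn
    (Set.nonempty_Icc.mpr hab)
    ((contOn_derivP hP).mono (fun z hz => lt_of_lt_of_le ha hz.1))
  set m := deriv P t₀ / t₀ with hmdef
  have hm0 : 0 < m := div_pos (hP' t₀ (lt_of_lt_of_le ha ht₀.1)) (lt_of_lt_of_le ha ht₀.1)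
  have hmiccc : ∀ t ∈ Set.Icc a b, m ≤ deriv P t / t := fun t ht => hmin ht
  refine ⟨m / 2 * (σ / 2) ^ 2, by positivity, ?_⟩
  intro ρapp happ x hx ρ hρpos
  set r := ρapp x with hrdef
  set t := x 2 with htdef
  have htmem : t ∈ Set.Icc (0:ℝ) 1 := ⟨hx.1.le, hx.2.le⟩
  have habs : |r - ρbar t| ≤ σ / 2 := happ x hx
  have habs' := abs_le.mp habs
  have hκt := hlow t htmem
  have hMt := hup t htmem
  have hrmem : r ∈ Set.Icc a b := by
    constructor
    · simp only [hadef]; linarith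
    · simp only [hbdef]; linarith
  have hrpos : 0 < r := lt_of_lt_of_le ha hrmem.1
  have hderiv : deriv H r = phiH P r := (hasDerivAt_H hP.continuousOn hHI hrpos).deriv
  have hErw : ∀ ρ' : ℝ, E ρ' r = H ρ' - H r - phiH P r * (ρ' - r) := by
    intro ρ'; rw [hE, hderiv]
  constructor
  · -- essential set
    intro hess
    have hess' := abs_lt.mp hess
    have hρmem : ρ ∈ Set.Icc a b := by
      constructor
      · simp only [hadef]; linarith
      · simp only [hbdef]; linarith
    constructor
    · rw [abs_lt]; constructor <;> linarith
    · have hq := rel_entropy_quad hP hHI ha hmiccc hrmem hρmem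
      rw [hErw]
      have hc2 : m / 2 * (σ / 2) ^ 2 * (ρ - r) ^ 2 ≤ m / 2 * (ρ - r) ^ 2 := by
        have h1 : (σ / 2) ^ 2 ≤ 1 := by nlinarith
        have h2 : (0:ℝ) ≤ m / 2 * (ρ - r) ^ 2 := by positivity
        calc m / 2 * (σ / 2) ^ 2 * (ρ - r) ^ 2 = (σ / 2) ^ 2 * (m / 2 * (ρ - r) ^ 2) := by ring
          _ ≤ 1 * (m / 2 * (ρ - r) ^ 2) := mul_le_mul_of_nonneg_right h1 h2
          _ = m / 2 * (ρ - r) ^ 2 := one_mul _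
      linarith
  · -- residual set
    intro hres
    have htri : σ ≤ |ρ - r| + σ / 2 := by
      calc σ ≤ |ρ - ρbar t| := hres
        _ ≤ |ρ - r| + |r - ρbar t| := abs_sub_le ρ r (ρbar t)
        _ ≤ |ρ - r| + σ / 2 := by linarith
    have hgap : σ / 2 ≤ |ρ - r| := by linarith
    rcases le_total r ρ with hle | hle
    · -- ρ ≥ r + σ/2
      have hρr : r + σ / 2 ≤ ρ := by
        rw [abs_of_nonneg (by linarith)] at hgap; linarith
      have humem : r + σ / 2 ∈ Set.Icc a b := by
        constructor
        · simp only [hadef]; linarith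
        · simp only [hbdef]; linarith
      have hq := rel_entropy_quad hP hHI ha hmiccc hrmem humem
      have hmono := rel_entropy_mono_right hP hP' hHI hrpos
        (le_add_of_nonneg_right (by linarith : (0:ℝ) ≤ σ / 2)) hρr
      rw [hErw]
      have heq : (r + σ / 2 - r) ^ 2 = (σ / 2) ^ 2 := by ring
      rw [heq] at hq
      linarith
    · -- ρ ≤ r − σ/2
      have hρr : ρ ≤ r - σ / 2 := by
        rw [abs_of_nonpos (by linarith)] at hgap; linarith
      have hvmem : r - σ / 2 ∈ Set.Icc a b := by
        constructor
        · simp only [hadef]; linarith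
        · simp only [hbdef]; linarith
      have hq := rel_entropy_quad hP hHI ha hmiccc hrmem hvmem
      have hanti := rel_entropy_anti_left hP hP' hHI hρpos hρr
        (by linarith : r - σ / 2 ≤ r)
      rw [hErw]
      have heq : (r - σ / 2 - r) ^ 2 = (σ / 2) ^ 2 := by ring
      rw [heq] at hq
      linarith
end
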